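/- A set S ⊆ ℕ is definable in Presburger arithmetic (first-order logic over (ℕ,+,<)) if and only if S is ultimately periodic, i.e., there exist t ∈ ℕ and p > 0 such that for all n ≥ t, n ∈ S ↔ n + p ∈ S. -/

import Mathlib

open FirstOrder

/-- The language of Presburger arithmetic: one binary function symbol (`+`)
and one binary relation symbol (`<`). -/
def presburgerLang : FirstOrder.Language where
  Functions n := match n with | 2 => Unit | _ => Empty
  Relations n := match n with | 2 => Unit | _ => Empty

/-- The standard structure `(ℕ, +, <)` for the Presburger language. -/
instance : presburgerLang.Structure ℕ where
  funMap {n} f x :=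
    match n, f with
    | 2, _ => x 0 + x 1
  RelMap {n} r x :=
    match n, r with
    | 2, _ => x 0 < x 1

/-!
Presburger's quantifier elimination. Call an *atom* an inequality `f ≤ g` or a congruence
`f ≡ g [MOD m]` between affine forms with natural coefficients. Boolean combinations of atoms
are closed under projection: let `z` be the least witness of `∃ y, φ (x, y)` for a conjunction of
atoms `φ`, and `M` the product of its moduli. Decreasing `y` by `M` preserves every congruence and
every inequality except the lower bounds `F ≤ G + d * y`. So either `z < M`, or some lower bound
fails at `z - M`, which gives `d * z + G = F + j` with `j < d * M`; multiplying `φ` by `d` and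
substituting `F + j - G` for `d * y` then eliminates `y`. Hence every Presburger-definable set is
such a Boolean combination, and in one variable every atom is eventually constant or periodic.

Conversely, an ultimately periodic set is a finite union of singletons and arithmetic
progressions. These are definable once the constants are, and `x < c + 1 ↔ ∀ y < x, y < c`
defines the initial segments of `ℕ` without constants.
-/

open FirstOrder.Language (BoundedFormula Formula Relations Term definableFun_var)
open Set

theorem Nat.not_modEq_iff_exists_add_modEq {m a b : ℕ} [NeZero m] :
    ¬ a ≡ b [MOD m] ↔ ∃ j ∈ Ioo 0 m, a + j ≡ b [MOD m] := by
  simp only [← ZMod.natCast_eq_natCast_iff, mem_Ioo, Nat.cast_add]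
  constructor
  · intro hab
    refine ⟨((b : ZMod m) - a).val, ⟨Nat.pos_of_ne_zero fun h => hab ?_, ZMod.val_lt _⟩, by simp⟩
    rw [ZMod.val_eq_zero, sub_eq_zero] at h
    exact h.symm
  · rintro ⟨j, ⟨hj, hjm⟩, hab⟩ h
    rw [h, add_eq_left, ZMod.natCast_eq_zero_iff] at hab
    exact absurd (Nat.le_of_dvd hj hab) (not_le.2 hjm)

theorem Set.definable₁_biUnion_finset {L : FirstOrder.Language} {M : Type*} [L.Structure M]
    {A : Set M} {ι : Type*} {T : ι → Set M} (h : ∀ i, A.Definable₁ L (T i)) (s : Finset ι) :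
    A.Definable₁ L (⋃ i ∈ s, T i) := by
  rw [Set.Definable₁]
  convert definable_biUnion_finset h s using 1
  ext
  simp

namespace Presburger

variable {k : ℕ}

def UltimatelyPeriodic (S : Set ℕ) : Prop :=
  ∃ t p : ℕ, 0 < p ∧ ∀ n ≥ t, (n ∈ S ↔ n + p ∈ S)

theorem add_mul_mem_iff {S : Set ℕ} {t p n : ℕ} (h : ∀ n ≥ t, (n ∈ S ↔ n + p ∈ S))
    (hn : t ≤ n) : ∀ k, n + p * k ∈ S ↔ n ∈ S
  | 0 => by simp
  | k + 1 => by rw [mul_add_one, ← add_assoc, ← h _ (by omega), add_mul_mem_iff h hn k]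

theorem ultimatelyPeriodic_of_forall_ge_iff {S : Set ℕ} (t : ℕ) (h : ∀ n ≥ t, (n ∈ S ↔ t ∈ S)) :
    UltimatelyPeriodic S :=
  ⟨t, 1, one_pos, fun n hn => (h n hn).trans (h (n + 1) (by omega)).symm⟩

namespace UltimatelyPeriodic

variable {S T : Set ℕ}

theorem compl (h : UltimatelyPeriodic S) : UltimatelyPeriodic Sᶜ := by
  obtain ⟨t, p, hp, h⟩ := h
  exact ⟨t, p, hp, fun n hn => not_congr (h n hn)⟩

theorem inter (hS : UltimatelyPeriodic S) (hT : UltimatelyPeriodic T) :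
    UltimatelyPeriodic (S ∩ T) := by
  obtain ⟨t, p, hp, hS⟩ := hS
  obtain ⟨t', p', hp', hT⟩ := hT
  refine ⟨max t t', p * p', Nat.mul_pos hp hp', fun n hn => ?_⟩
  rw [ge_iff_le, max_le_iff] at hn
  have hT' := add_mul_mem_iff hT hn.2 p
  rw [mul_comm p'] at hT'
  exact and_congr (add_mul_mem_iff hS hn.1 p').symm hT'.symm

end UltimatelyPeriodic

def ultimatelyPeriodicSets : BooleanSubalgebra (Set ℕ) where
  carrier := {S | UltimatelyPeriodic S}
  supClosed' S hS T hT := by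
    rw [← compl_compl (S ⊔ T), compl_sup]
    exact (hS.compl.inter hT.compl).compl
  infClosed' _ hS _ hT := hS.inter hT
  compl_mem' hS := hS.compl
  bot_mem' := ultimatelyPeriodic_of_forall_ge_iff 0 (by simp)

structure AffineForm (k : ℕ) where
  coeff : Fin k → ℕ
  const : ℕ

namespace AffineForm

def eval (F : AffineForm k) (x : Fin k → ℕ) : ℕ := ∑ i, F.coeff i * x i + F.const

instance : Add (AffineForm k) where
  add F G := ⟨F.coeff + G.coeff, F.const + G.const⟩

instance : SMul ℕ (AffineForm k) where
  smul c F := ⟨c • F.coeff, c * F.const⟩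

def constant (c : ℕ) : AffineForm k := ⟨0, c⟩

def var (i : Fin k) : AffineForm k := ⟨Pi.single i 1, 0⟩

@[simp] theorem eval_add (F G : AffineForm k) (x : Fin k → ℕ) :
    (F + G).eval x = F.eval x + G.eval x := by
  change ∑ i, (F.coeff i + G.coeff i) * x i + (F.const + G.const) = _
  simp only [eval, add_mul, Finset.sum_add_distrib]
  ring

@[simp] theorem eval_smul (c : ℕ) (F : AffineForm k) (x : Fin k → ℕ) :
    (c • F).eval x = c * F.eval x := by
  change ∑ i, c * F.coeff i * x i + c * F.const = _
  simp only [eval, mul_add, Finset.mul_sum, mul_assoc]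

@[simp] theorem eval_constant (c : ℕ) (x : Fin k → ℕ) : (constant c).eval x = c := by
  simp [eval, constant]

@[simp] theorem eval_var (i : Fin k) (x : Fin k → ℕ) : (var i).eval x = x i := by
  simp [eval, var, Pi.single_apply]

def init (F : AffineForm (k + 1)) : AffineForm k := ⟨Fin.init F.coeff, F.const⟩

def last (F : AffineForm (k + 1)) : ℕ := F.coeff (Fin.last k)

theorem eval_snoc (F : AffineForm (k + 1)) (x : Fin k → ℕ) (y : ℕ) :
    F.eval (Fin.snoc x y) = F.init.eval x + F.last * y := by
  simp only [eval, init, last, Fin.sum_univ_castSucc, Fin.snoc_castSucc, Fin.snoc_last, Fin.init]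
  ring

def substLast (F : AffineForm (k + 1)) (E : AffineForm k) : AffineForm k := F.init + F.last • E

@[simp] theorem eval_substLast (F : AffineForm (k + 1)) (E : AffineForm k) (x : Fin k → ℕ) :
    (F.substLast E).eval x = F.eval (Fin.snoc x (E.eval x)) := by
  simp [substLast, eval_snoc]

/-- `d • f` with `d * y` replaced by `H - G`, where `y` is the last variable; the subtraction is
avoided by adding `(f.last + g.last) • G`, the same amount for the two sides `f`, `g` of an atom. -/
def elimScaled (d : ℕ) (G H : AffineForm k) (f g : AffineForm (k + 1)) : AffineForm k :=
  d • f.init + f.last • H + g.last • G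

theorem eval_elimScaled {d y : ℕ} {G H : AffineForm k} {x : Fin k → ℕ}
    (hy : d * y + G.eval x = H.eval x) (f g : AffineForm (k + 1)) :
    (elimScaled d G H f g).eval x = d * f.eval (Fin.snoc x y) + (f.last + g.last) * G.eval x := by
  simp only [elimScaled, eval_add, eval_smul, eval_snoc, ← hy]
  ring

end AffineForm

/-- Moduli are positive, so that every atom is periodic in each variable. -/
inductive Atom (k : ℕ)
  | le (f g : AffineForm k)
  | modEq (m : ℕ+) (f g : AffineForm k)

namespace Atom

def Holds : Atom k → (Fin k → ℕ) → Prop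
  | le f g, x => f.eval x ≤ g.eval x
  | modEq m f g, x => f.eval x ≡ g.eval x [MOD m]

def period : Atom k → ℕ
  | le _ _ => 1
  | modEq m _ _ => m

def substLast (E : AffineForm k) : Atom (k + 1) → Atom k
  | le f g => le (f.substLast E) (g.substLast E)
  | modEq m f g => modEq m (f.substLast E) (g.substLast E)

theorem holds_substLast (E : AffineForm k) (a : Atom (k + 1)) (x : Fin k → ℕ) :
    (a.substLast E).Holds x ↔ a.Holds (Fin.snoc x (E.eval x)) := by
  cases a <;> simp [substLast, Holds]

def elimScaled (d : ℕ+) (G H : AffineForm k) : Atom (k + 1) → Atom k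
  | le f g => le (.elimScaled d G H f g) (.elimScaled d G H g f)
  | modEq m f g => modEq (d * m) (.elimScaled d G H f g) (.elimScaled d G H g f)

theorem holds_elimScaled {d : ℕ+} {y : ℕ} {G H : AffineForm k} {x : Fin k → ℕ}
    (hy : d * y + G.eval x = H.eval x) (a : Atom (k + 1)) :
    (a.elimScaled d G H).Holds x ↔ a.Holds (Fin.snoc x y) := by
  cases a with
  | le f g =>
    simp only [elimScaled, Holds, AffineForm.eval_elimScaled hy, add_comm g.last]
    rw [Nat.add_le_add_iff_right, Nat.mul_le_mul_left_iff d.pos]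
  | modEq m f g =>
    simp only [elimScaled, Holds, AffineForm.eval_elimScaled hy, add_comm g.last, PNat.mul_coe]
    rw [Nat.ModEq.rfl.add_iff_right, Nat.ModEq.mul_left_cancel_iff' d.ne_zero]

def lowerBound : Atom (k + 1) → Option (ℕ+ × AffineForm k × AffineForm k)
  | le f g =>
    if h : f.last < g.last then some (⟨g.last - f.last, Nat.sub_pos_of_lt h⟩, f.init, g.init)
    else none
  | modEq _ _ _ => none

theorem holds_snoc_iff_of_lowerBound_eq_some {a : Atom (k + 1)} {d : ℕ+} {F G : AffineForm k}
    (h : a.lowerBound = some (d, F, G)) (x : Fin k → ℕ) (y : ℕ) :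
    a.Holds (Fin.snoc x y) ↔ F.eval x ≤ G.eval x + d * y := by
  cases a with
  | le f g =>
    simp only [lowerBound] at h
    split_ifs at h with hfg
    obtain ⟨rfl, rfl, rfl⟩ := h
    simp only [Holds, AffineForm.eval_snoc, PNat.mk_coe, Nat.sub_mul]
    have : f.last * y ≤ g.last * y := Nat.mul_le_mul_right y hfg.le
    omega
  | modEq => simp [lowerBound] at h

theorem holds_snoc_sub_of_lowerBound_eq_none {a : Atom (k + 1)} (h : a.lowerBound = none)
    {M z : ℕ} (hM : a.period ∣ M) (hz : M ≤ z) {x : Fin k → ℕ} (ha : a.Holds (Fin.snoc x z)) :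
    a.Holds (Fin.snoc x (z - M)) := by
  obtain ⟨w, rfl⟩ := Nat.exists_eq_add_of_le' hz
  rw [Nat.add_sub_cancel]
  cases a with
  | le f g =>
    simp only [lowerBound, dite_eq_right_iff, reduceCtorEq, imp_false, not_lt] at h
    simp only [Holds, AffineForm.eval_snoc, mul_add] at ha ⊢
    have : g.last * M ≤ f.last * M := Nat.mul_le_mul_right M h
    omega
  | modEq m f g =>
    obtain ⟨q, rfl⟩ := hM
    have hmul (c : ℕ) : c * (m * q) ≡ 0 [MOD m] :=
      Nat.modEq_zero_iff_dvd.2 (dvd_mul_of_dvd_right (dvd_mul_right _ q) c)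
    simp only [Holds, AffineForm.eval_snoc, mul_add, ← add_assoc] at ha ⊢
    exact ((hmul _).trans (hmul _).symm).add_iff_right.1 ha

end Atom

def qfSets (k : ℕ) : BooleanSubalgebra (Set (Fin k → ℕ)) :=
  BooleanSubalgebra.closure (range fun a : Atom k => {x | a.Holds x})

theorem ofPred_holds_mem_qfSets (a : Atom k) : {x | a.Holds x} ∈ qfSets k :=
  BooleanSubalgebra.subset_closure ⟨a, rfl⟩

theorem ofPred_forall_holds_mem_qfSets (c : List (Atom k)) :
    {x | ∀ a ∈ c, a.Holds x} ∈ qfSets k := by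
  convert (qfSets k).biInf_mem c.finite_toSet fun a _ => ofPred_holds_mem_qfSets a
  ext
  simp

theorem qfSets_le {L : BooleanSubalgebra (Set (Fin k → ℕ))}
    (h : ∀ a : Atom k, {x | a.Holds x} ∈ L) : qfSets k ≤ L :=
  BooleanSubalgebra.closure_le.2 (range_subset_iff.2 h)

def dnfSet (D : List (List (Atom k))) : Set (Fin k → ℕ) := {x | ∃ c ∈ D, ∀ a ∈ c, a.Holds x}

theorem dnfSet_append (D₁ D₂ : List (List (Atom k))) :
    dnfSet (D₁ ++ D₂) = dnfSet D₁ ∪ dnfSet D₂ := by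
  ext
  simp [dnfSet, or_and_right, exists_or]

theorem dnfSet_map_append_product (D₁ D₂ : List (List (Atom k))) :
    dnfSet ((D₁ ×ˢ D₂).map fun c => c.1 ++ c.2) = dnfSet D₁ ∩ dnfSet D₂ := by
  ext
  simp only [dnfSet, List.mem_map, Prod.exists, List.mem_product, ↓existsAndEq, and_true,
    List.mem_append, or_imp, forall_and, mem_ofPred_eq, mem_inter_iff]
  exact ⟨fun ⟨c₁, c₂, ⟨h₁, h₂⟩, hc₁, hc₂⟩ => ⟨⟨c₁, h₁, hc₁⟩, c₂, h₂, hc₂⟩,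
    fun ⟨⟨c₁, h₁, hc₁⟩, c₂, h₂, hc₂⟩ => ⟨c₁, c₂, ⟨h₁, h₂⟩, hc₁, hc₂⟩⟩

theorem supClosed_range_dnfSet : SupClosed (range (dnfSet (k := k))) := by
  rintro _ ⟨D₁, rfl⟩ _ ⟨D₂, rfl⟩
  exact ⟨D₁ ++ D₂, dnfSet_append D₁ D₂⟩

theorem infClosed_range_dnfSet : InfClosed (range (dnfSet (k := k))) := by
  rintro _ ⟨D₁, rfl⟩ _ ⟨D₂, rfl⟩
  exact ⟨_, dnfSet_map_append_product D₁ D₂⟩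

theorem bot_mem_range_dnfSet : (⊥ : Set (Fin k → ℕ)) ∈ range dnfSet :=
  ⟨[], by simp [dnfSet]⟩

theorem top_mem_range_dnfSet : (⊤ : Set (Fin k → ℕ)) ∈ range dnfSet :=
  ⟨[ [] ], by simp [dnfSet]⟩

theorem compl_ofPred_holds_mem_range_dnfSet (a : Atom k) : {x | a.Holds x}ᶜ ∈ range dnfSet := by
  cases a with
  | le f g =>
    refine ⟨[ [.le (g + .constant 1) f] ], ?_⟩
    ext
    simp [dnfSet, Atom.Holds]
  | modEq m f g =>
    convert supClosed_range_dnfSet.biSup_mem (finite_Ioo 0 (m : ℕ)) bot_mem_range_dnfSet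
      fun j _ => ⟨[ [.modEq m (f + .constant j) g] ], rfl⟩
    ext
    simp [dnfSet, Atom.Holds, Nat.not_modEq_iff_exists_add_modEq]

theorem compl_dnfSet_mem_range_dnfSet (D : List (List (Atom k))) :
    (dnfSet D)ᶜ ∈ range dnfSet := by
  convert infClosed_range_dnfSet.biInf_mem D.finite_toSet top_mem_range_dnfSet fun c _ =>
    supClosed_range_dnfSet.biSup_mem c.finite_toSet bot_mem_range_dnfSet fun a _ =>
      compl_ofPred_holds_mem_range_dnfSet a
  ext
  simp [dnfSet]

theorem exists_dnfSet_eq {s : Set (Fin k → ℕ)} (hs : s ∈ qfSets k) : ∃ D, dnfSet D = s := by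
  induction hs using BooleanSubalgebra.closure_bot_sup_induction with
  | mem _ ha =>
    obtain ⟨a, rfl⟩ := ha
    exact ⟨[ [a] ], by ext; simp [dnfSet]⟩
  | bot => exact bot_mem_range_dnfSet
  | sup _ _ _ _ h₁ h₂ => exact supClosed_range_dnfSet h₁ h₂
  | compl _ _ h =>
    obtain ⟨D, rfl⟩ := h
    exact compl_dnfSet_mem_range_dnfSet D

def conjPeriod (c : List (Atom k)) : ℕ := (c.map Atom.period).prod

theorem conjPeriod_pos (c : List (Atom k)) : 0 < conjPeriod c :=
  List.prod_pos fun n hn => by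
    obtain ⟨a, -, rfl⟩ := List.mem_map.1 hn
    cases a <;> simp [Atom.period]

theorem period_dvd_conjPeriod {a : Atom k} {c : List (Atom k)} (ha : a ∈ c) :
    a.period ∣ conjPeriod c :=
  List.dvd_prod (List.mem_map_of_mem ha)

theorem exists_forall_holds_snoc_iff {c : List (Atom (k + 1))} (x : Fin k → ℕ) :
    (∃ y, ∀ a ∈ c, a.Holds (Fin.snoc x y)) ↔
      (∃ j < conjPeriod c, ∀ a ∈ c, a.Holds (Fin.snoc x j)) ∨
      ∃ t ∈ c.filterMap Atom.lowerBound, ∃ j < t.1 * conjPeriod c,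
        ∃ y, t.1 * y + t.2.2.eval x = (t.2.1 + .constant j).eval x ∧
          ∀ a ∈ c, a.Holds (Fin.snoc x y) := by
  classical
  refine ⟨fun h => ?_, ?_⟩
  · set M := conjPeriod c
    obtain ⟨z, hz_holds, hz_min⟩ : ∃ z, (∀ a ∈ c, a.Holds (Fin.snoc x z)) ∧
        ∀ w < z, ¬ ∀ a ∈ c, a.Holds (Fin.snoc x w) :=
      ⟨Nat.find h, Nat.find_spec h, fun _ => Nat.find_min h⟩
    obtain hz | hz := lt_or_ge z M
    · exact Or.inl ⟨z, hz, hz_holds⟩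
    obtain ⟨a, ha, hfail⟩ : ∃ a ∈ c, ¬ a.Holds (Fin.snoc x (z - M)) := by
      have hM := conjPeriod_pos c
      simpa using hz_min (z - M) (by omega)
    have hhold := hz_holds a ha
    cases hb : a.lowerBound with
    | none =>
      exact absurd (Atom.holds_snoc_sub_of_lowerBound_eq_none hb (period_dvd_conjPeriod ha) hz
        hhold) hfail
    | some t =>
      obtain ⟨d, F, G⟩ := t
      rw [Atom.holds_snoc_iff_of_lowerBound_eq_some hb] at hhold hfail
      have : d * (z - M) + d * M = d * z := by rw [← mul_add, Nat.sub_add_cancel hz]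
      refine Or.inr ⟨(d, F, G), List.mem_filterMap.2 ⟨a, ha, hb⟩, G.eval x + d * z - F.eval x,
        by show _ < d * M; omega, z, ?_, hz_holds⟩
      simp only [AffineForm.eval_add, AffineForm.eval_constant]
      omega
  · rintro (⟨j, -, hj⟩ | ⟨t, -, j, -, y, -, hy⟩)
    exacts [⟨j, hj⟩, ⟨y, hy⟩]

theorem exists_mul_add_eq_and_forall_holds_snoc_iff (c : List (Atom (k + 1))) (d : ℕ+)
    (G H : AffineForm k) (x : Fin k → ℕ) :
    (∃ y, d * y + G.eval x = H.eval x ∧ ∀ a ∈ c, a.Holds (Fin.snoc x y)) ↔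
      ∀ a ∈ .le G H :: .modEq d G H :: c.map (Atom.elimScaled d G H), a.Holds x := by
  simp only [List.forall_mem_cons, List.forall_mem_map, Atom.Holds]
  constructor
  · rintro ⟨y, hy, hc⟩
    exact ⟨by omega, (Nat.modEq_iff_dvd' (by omega)).2 ⟨y, by omega⟩,
      fun a ha => (Atom.holds_elimScaled hy a).2 (hc a ha)⟩
  · rintro ⟨hGH, hmod, hc⟩
    obtain ⟨y, hy⟩ := (Nat.modEq_iff_dvd' hGH).1 hmod
    have hy' : d * y + G.eval x = H.eval x := by omega
    exact ⟨y, hy', fun a ha => (Atom.holds_elimScaled hy' a).1 (hc a ha)⟩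

theorem exists_forall_holds_snoc_mem_qfSets (c : List (Atom (k + 1))) :
    {x | ∃ y, ∀ a ∈ c, a.Holds (Fin.snoc x y)} ∈ qfSets k := by
  have hsmall (j : ℕ) : {x | ∀ a ∈ c, a.Holds (Fin.snoc x j)} ∈ qfSets k := by
    simpa [Atom.holds_substLast] using
      ofPred_forall_holds_mem_qfSets (c.map (Atom.substLast (.constant j)))
  have hlower (d : ℕ+) (G H : AffineForm k) :
      {x | ∃ y, d * y + G.eval x = H.eval x ∧ ∀ a ∈ c, a.Holds (Fin.snoc x y)} ∈ qfSets k := by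
    simpa only [exists_mul_add_eq_and_forall_holds_snoc_iff] using
      ofPred_forall_holds_mem_qfSets _
  have hdecomp : {x | ∃ y, ∀ a ∈ c, a.Holds (Fin.snoc x y)} =
      (⨆ j ∈ Iio (conjPeriod c), {x | ∀ a ∈ c, a.Holds (Fin.snoc x j)}) ⊔
        ⨆ t ∈ {t | t ∈ c.filterMap Atom.lowerBound}, ⨆ j ∈ Iio (t.1 * conjPeriod c),
          {x | ∃ y, t.1 * y + t.2.2.eval x = (t.2.1 + .constant j).eval x ∧
            ∀ a ∈ c, a.Holds (Fin.snoc x y)} := by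
    ext x
    simp only [mem_ofPred_eq, sup_eq_union, iSup_eq_iUnion, mem_union, mem_iUnion, mem_Iio,
      exists_prop]
    exact exists_forall_holds_snoc_iff x
  rw [hdecomp]
  exact (qfSets k).sup_mem ((qfSets k).biSup_mem (finite_Iio _) fun j _ => hsmall j)
    ((qfSets k).biSup_mem (List.finite_toSet _) fun _ _ =>
      (qfSets k).biSup_mem (finite_Iio _) fun _ _ => hlower _ _ _)

theorem exists_snoc_mem_qfSets {s : Set (Fin (k + 1) → ℕ)} (hs : s ∈ qfSets (k + 1)) :
    {x | ∃ y, Fin.snoc x y ∈ s} ∈ qfSets k := by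
  obtain ⟨D, rfl⟩ := exists_dnfSet_eq hs
  convert (qfSets k).biSup_mem D.finite_toSet fun c _ => exists_forall_holds_snoc_mem_qfSets c
  ext x
  simp only [dnfSet, mem_ofPred_eq, iSup_eq_iUnion, mem_iUnion, exists_prop]
  exact ⟨fun ⟨y, c, hc, h⟩ => ⟨c, hc, y, h⟩, fun ⟨c, hc, y, h⟩ => ⟨y, c, hc, h⟩⟩

theorem forall_snoc_mem_qfSets {s : Set (Fin (k + 1) → ℕ)} (hs : s ∈ qfSets (k + 1)) :
    {x | ∀ y, Fin.snoc x y ∈ s} ∈ qfSets k := by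
  convert (qfSets k).compl_mem (exists_snoc_mem_qfSets ((qfSets _).compl_mem hs)) using 1
  ext
  simp

theorem eq_two_of_functions : ∀ {l : ℕ}, presburgerLang.Functions l → l = 2
  | 2, _ => rfl
  | 0, f | 1, f | _ + 3, f => nomatch f

theorem eq_two_of_relations : ∀ {l : ℕ}, presburgerLang.Relations l → l = 2
  | 2, _ => rfl
  | 0, r | 1, r | _ + 3, r => nomatch r

theorem exists_affineForm_realize {ι : Type*} (e : ι → Fin k) (t : presburgerLang.Term ι) :
    ∃ F : AffineForm k, ∀ x, t.realize (x ∘ e) = F.eval x := by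
  induction t with
  | var i => exact ⟨.var (e i), fun x => by simp⟩
  | func f ts ih =>
    obtain rfl := eq_two_of_functions f
    choose F hF using ih
    exact ⟨F 0 + F 1, fun x => by simp only [AffineForm.eval_add, ← hF]; rfl⟩

theorem ofPred_boundedFormula_realize_mem_qfSets {n : ℕ}
    (φ : presburgerLang.BoundedFormula (Fin k) n) :
    {x : Fin (k + n) → ℕ | φ.Realize (x ∘ Fin.castAdd n) (x ∘ Fin.natAdd k)} ∈ qfSets (k + n) := by
  induction φ with
  | falsum => exact (qfSets _).bot_mem
  | @equal n t₁ t₂ =>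
    obtain ⟨F₁, h₁⟩ := exists_affineForm_realize (Sum.elim (Fin.castAdd n) (Fin.natAdd k)) t₁
    obtain ⟨F₂, h₂⟩ := exists_affineForm_realize (Sum.elim (Fin.castAdd n) (Fin.natAdd k)) t₂
    convert (qfSets _).inf_mem (ofPred_holds_mem_qfSets (.le F₁ F₂))
      (ofPred_holds_mem_qfSets (.le F₂ F₁)) using 1
    ext x
    simp [BoundedFormula.Realize, ← Sum.comp_elim, h₁, h₂, Atom.Holds, le_antisymm_iff]
  | @rel n l R ts =>
    obtain rfl := eq_two_of_relations R
    choose F hF using fun i =>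
      exists_affineForm_realize (Sum.elim (Fin.castAdd n) (Fin.natAdd k)) (ts i)
    convert ofPred_holds_mem_qfSets (.le (F 0 + .constant 1) (F 1)) using 1
    ext x
    simp only [BoundedFormula.Realize, ← Sum.comp_elim, hF, mem_ofPred_eq, Atom.Holds,
      AffineForm.eval_add, AffineForm.eval_constant]
    exact Nat.lt_iff_add_one_le
  | imp φ ψ ih₁ ih₂ => exact (qfSets _).himp_mem ih₁ ih₂
  | @all n φ ih =>
    convert forall_snoc_mem_qfSets (k := k + n) ih using 1
    ext x
    refine forall_congr' fun y => ?_
    change _ ↔ φ.Realize (Fin.snoc x y ∘ Fin.castAdd (n + 1)) (Fin.snoc x y ∘ Fin.natAdd k)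
    rw [Fin.snoc_comp_castAdd, Fin.snoc_comp_natAdd]

theorem ofPred_formula_realize_mem_qfSets (φ : presburgerLang.Formula (Fin k)) :
    ofPred φ.Realize ∈ qfSets k := by
  have h : {x : Fin k → ℕ | BoundedFormula.Realize φ (x ∘ Fin.castAdd 0) (x ∘ Fin.natAdd k)} ∈
      qfSets k := ofPred_boundedFormula_realize_mem_qfSets φ
  convert h using 1
  ext x
  change φ.Realize x ↔ BoundedFormula.Realize φ (x ∘ Fin.castAdd 0) (x ∘ Fin.natAdd k)
  exact iff_of_eq (congrArg (BoundedFormula.Realize φ x) (Subsingleton.elim _ _))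

theorem ultimatelyPeriodic_ofPred_holds (a : Atom 1) :
    UltimatelyPeriodic {n | a.Holds fun _ => n} := by
  have heval (F : AffineForm 1) (n : ℕ) : F.eval (fun _ => n) = F.coeff 0 * n + F.const := by
    simp [AffineForm.eval]
  cases a with
  | le f g =>
    refine ultimatelyPeriodic_of_forall_ge_iff (f.const + g.const + 1) fun n hn => ?_
    simp only [mem_ofPred_eq, Atom.Holds, heval]
    rcases lt_trichotomy (f.coeff 0) (g.coeff 0) with h | h | h
    · exact iff_of_true (by nlinarith) (by nlinarith)
    · simp [h]
    · exact iff_of_false (by nlinarith) (by nlinarith)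
  | modEq m f g =>
    refine ⟨0, m, m.pos, fun n _ => ?_⟩
    have hshift (F : AffineForm 1) : F.eval (fun _ => n + m) ≡ F.eval (fun _ => n) [MOD m] := by
      simp only [Nat.ModEq, heval, mul_add, add_right_comm _ (F.coeff 0 * m),
        Nat.add_mul_mod_self_right]
    exact ⟨fun h => (hshift f).trans (h.trans (hshift g).symm),
      fun h => (hshift f).symm.trans (h.trans (hshift g))⟩

theorem ultimatelyPeriodic_of_mem_qfSets {s : Set (Fin 1 → ℕ)} (hs : s ∈ qfSets 1) :
    UltimatelyPeriodic {n | (fun _ => n) ∈ s} :=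
  qfSets_le (L := ultimatelyPeriodicSets.comap
    (CompleteLatticeHom.setPreimage fun n _ => n).toBoundedLatticeHom)
    ultimatelyPeriodic_ofPred_holds hs

theorem ultimatelyPeriodic_of_definable₁ {S : Set ℕ}
    (h : (∅ : Set ℕ).Definable₁ presburgerLang S) : UltimatelyPeriodic S := by
  obtain ⟨φ, hφ⟩ := empty_definable_iff.1 h
  exact ultimatelyPeriodic_of_mem_qfSets (hφ ▸ ofPred_formula_realize_mem_qfSets φ)

section Definability

variable {α : Type*} {f g : (α → ℕ) → ℕ}

theorem definableFun_add (hf : (∅ : Set ℕ).DefinableFun presburgerLang f)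
    (hg : (∅ : Set ℕ).DefinableFun presburgerLang g) :
    (∅ : Set ℕ).DefinableFun presburgerLang fun v => f v + g v :=
  (DefinableFun.fun_symbol (n := 2) ()).comp (g := fun v => ![f v, g v])
    (by simp [DefinableMap, Fin.forall_fin_two, *])

theorem definable_ofPred_lt (hf : (∅ : Set ℕ).DefinableFun presburgerLang f)
    (hg : (∅ : Set ℕ).DefinableFun presburgerLang g) :
    (∅ : Set ℕ).Definable presburgerLang {v | f v < g v} := by
  have hlt : (∅ : Set ℕ).Definable presburgerLang {x : Fin 2 → ℕ | x 0 < x 1} :=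
    empty_definable_iff.2 ⟨Relations.formula₂ () (Term.var 0) (Term.var 1), rfl⟩
  exact hlt.preimage_map (F := fun v => ![f v, g v])
    (by simp [DefinableMap, Fin.forall_fin_two, *])

theorem definable₁_Iio : ∀ c : ℕ, (∅ : Set ℕ).Definable₁ presburgerLang (Iio c)
  | 0 => by simp [Definable₁]
  | c + 1 => by
    have hlt := definable_ofPred_lt (definableFun_var presburgerLang (Sum.inr 0 : Fin 1 ⊕ Fin 1))
      (definableFun_var presburgerLang (Sum.inl 0))
    have hc := (definable₁_Iio c).preimage_comp fun _ : Fin 1 => (Sum.inr 0 : Fin 1 ⊕ Fin 1)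
    rw [Definable₁]
    convert (hlt.himp hc).forall_of_finite using 1
    ext x
    simp only [mem_ofPred_eq, mem_Iio, mem_himp_iff, mem_preimage, Function.comp_apply,
      Sum.elim_inl, Sum.elim_inr]
    refine ⟨fun hx u hu => by omega, fun h => ?_⟩
    by_contra! hx
    exact lt_irrefl c (h (fun _ => c) (by simpa using hx))

theorem definable₁_singleton (c : ℕ) : (∅ : Set ℕ).Definable₁ presburgerLang {c} := by
  rw [Definable₁]
  convert (definable₁_Iio (c + 1)).sdiff (definable₁_Iio c) using 1
  ext x
  simp only [mem_singleton_iff, mem_ofPred_eq, mem_sdiff, mem_Iio]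
  omega

theorem definableFun_const (c : ℕ) :
    (∅ : Set ℕ).DefinableFun presburgerLang fun _ : α → ℕ => c := by
  rw [DefinableFun]
  convert (definable₁_singleton c).preimage_comp fun _ : Fin 1 => (none : Option α) using 1
  ext w
  simp [Function.tupleGraph, eq_comm]

theorem definableFun_const_mul (hf : (∅ : Set ℕ).DefinableFun presburgerLang f) (q : ℕ) :
    (∅ : Set ℕ).DefinableFun presburgerLang fun v => q * f v := by
  induction q with
  | zero => simpa using definableFun_const 0
  | succ q ih => simpa [add_mul] using definableFun_add ih hf

end Definability

theorem definable₁_ofPred_exists_eq_add_mul (r q : ℕ) :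
    (∅ : Set ℕ).Definable₁ presburgerLang {n | ∃ k, n = r + q * k} := by
  have h := DefinableFun.ofPred_eq
    (definableFun_var presburgerLang (Sum.inl 0 : Fin 1 ⊕ Fin 1))
    (definableFun_add (definableFun_const r)
      (definableFun_const_mul (definableFun_var presburgerLang (Sum.inr 0)) q))
  rw [Definable₁]
  convert h.exists_of_finite using 1
  ext x
  simp only [mem_ofPred_eq, Sum.elim_inl, Sum.elim_inr]
  exact ⟨fun ⟨k, hk⟩ => ⟨fun _ => k, hk⟩, fun ⟨u, hu⟩ => ⟨u 0, hu⟩⟩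

theorem eq_union_of_forall_ge_iff {S : Set ℕ} [DecidablePred (· ∈ S)] {t p : ℕ} (hp : 0 < p)
    (h : ∀ n ≥ t, (n ∈ S ↔ n + p ∈ S)) :
    S = (⋃ m ∈ (Finset.range t).filter (· ∈ S), {m}) ∪
      ⋃ m ∈ (Finset.Ico t (t + p)).filter (· ∈ S), {n | ∃ k, n = m + p * k} := by
  ext n
  simp only [mem_union, mem_iUnion, Finset.mem_filter, Finset.mem_range, Finset.mem_Ico,
    mem_singleton_iff, mem_ofPred_eq, exists_prop]
  constructor
  · intro hn
    rcases lt_or_ge n t with hnt | hnt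
    · exact Or.inl ⟨n, ⟨hnt, hn⟩, rfl⟩
    have hdiv := Nat.div_add_mod (n - t) p
    have hmod := Nat.mod_lt (n - t) hp
    have hm : t + (n - t) % p + p * ((n - t) / p) = n := by omega
    refine Or.inr ⟨t + (n - t) % p, ⟨⟨by omega, by omega⟩, ?_⟩, (n - t) / p, hm.symm⟩
    rwa [← add_mul_mem_iff h (by omega), hm]
  · rintro (⟨m, ⟨-, hm⟩, rfl⟩ | ⟨m, ⟨⟨htm, -⟩, hm⟩, k, rfl⟩)
    exacts [hm, (add_mul_mem_iff h htm k).2 hm]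

theorem definable₁_of_ultimatelyPeriodic {S : Set ℕ} (h : UltimatelyPeriodic S) :
    (∅ : Set ℕ).Definable₁ presburgerLang S := by
  classical
  obtain ⟨t, p, hp, h⟩ := h
  rw [eq_union_of_forall_ge_iff hp h]
  exact (definable₁_biUnion_finset definable₁_singleton _).union
    (definable₁_biUnion_finset (fun m => definable₁_ofPred_exists_eq_add_mul m p) _)

end Presburger

/-- A set of naturals is Presburger-definable (first-order definable over
`(ℕ, +, <)`) iff it is ultimately periodic. -/
theorem presburger_definable_iff_ultimately_periodic (S : Set ℕ) :
    (∅ : Set ℕ).Definable₁ presburgerLang S ↔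
      ∃ t : ℕ, ∃ p : ℕ, 0 < p ∧ ∀ n ≥ t, (n ∈ S ↔ n + p ∈ S) :=
  ⟨Presburger.ultimatelyPeriodic_of_definable₁, Presburger.definable₁_of_ultimatelyPeriodic⟩
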